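/- Fix integers 0 < p < d, set q := d − p, let K ≥ 1 be an integer, let b_1, …, b_K ∈ {0,1}, and let H_0, …, H_{K−1} be the stack-height sequence determined by b_1, …, b_{K−1}. Then Σ_{t ∈ [K] : b_t = 1} H_{t−1} − (p/q)·Σ_{t ∈ [K] : b_t = 0} H_{t−1} ≤ (p/q + 2)·p·K. -/
import Mathlib


/-- The stack-height sequence determined by parameters `p, q` and bits `b`
(0-indexed: `b i` is the bit `b_{i+1}`): `H_0 = 0`, and `H_{i+1}` is obtained from `H_i`
by adding `p` chips if `b_{i+1} = 0`, and removing `min(q, H_i)` chips if `b_{i+1} = 1`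
(truncated subtraction on `ℕ` realizes `max(H_i - q, 0)`). -/
def stackH (p q : ℕ) (b : ℕ → Bool) : ℕ → ℕ
  | 0 => 0
  | i + 1 => if b i then stackH p q b i - q else stackH p q b i + p

/-- `cars b t` is `b_1 + ⋯ + b_t`. -/
def cars (b : ℕ → Bool) (t : ℕ) : ℕ :=
  ((Finset.range t).filter (fun i => b i = true)).card

/-- Key estimate for condition (iii) of Lemma 3.1: with `q = d - p`,
`Σ_{t ∈ [K], b_t = 1} H_{t-1} - (p/q) Σ_{t ∈ [K], b_t = 0} H_{t-1} ≤ (p/q + 2) p K`. -/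
theorem stack_height_chip_bound (p d : ℕ) (hp : 0 < p) (hpd : p < d)
    (K : ℕ) (hK : 1 ≤ K) (b : ℕ → Bool) :
    (∑ t ∈ Finset.range K, if b t then (stackH p (d - p) b t : ℝ) else 0)
        - (p : ℝ) / ((d : ℝ) - p) *
          ∑ t ∈ Finset.range K, (if b t then 0 else (stackH p (d - p) b t : ℝ))
      ≤ ((p : ℝ) / ((d : ℝ) - p) + 2) * p * K := by
  have hq0 : 0 < d - p := Nat.sub_pos_of_lt hpd
  have hcast : ((d - p : ℕ) : ℝ) = (d : ℝ) - p := Nat.cast_sub hpd.le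
  rw [← hcast]
  set q := d - p with hqdef
  set H := stackH p q b with hHdef
  have hqR : (0:ℝ) < (q:ℝ) := by exact_mod_cast hq0
  set Φ : ℕ → ℝ := fun t => ((H t : ℝ))^2 + 2*(q:ℝ)*(H t : ℝ) with hΦ
  have key : ∀ t, 2*(q:ℝ)*((if b t then (H t : ℝ) else 0)
        - (p:ℝ)/(q:ℝ) * (if b t then 0 else (H t : ℝ)))
      ≤ Φ t - Φ (t+1) + 2*((p:ℝ) + 2*(q:ℝ))*(p:ℝ) := by
    intro t
    have hstep : H (t+1) = if b t then H t - q else H t + p := rfl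
    have hnn : (0:ℝ) ≤ (H t : ℝ) := by positivity
    have hpR : (0:ℝ) < (p:ℝ) := by exact_mod_cast hp
    cases hbt : b t with
    | false =>
      have h1 : (H (t+1) : ℝ) = (H t : ℝ) + p := by
        rw [hstep, hbt]; push_cast; ring
      have hpq : (q:ℝ) * ((p:ℝ)/(q:ℝ)) = (p:ℝ) := by field_simp
      simp only [hbt, Bool.false_eq_true, if_false, hΦ, h1]
      have heq : 2*(q:ℝ)*((0:ℝ) - (p:ℝ)/(q:ℝ)*(H t:ℝ)) = -(2*(p:ℝ)*(H t:ℝ)) := by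
        field_simp; ring
      rw [heq]
      nlinarith [hnn, hqR, hpR]
    | true =>
      simp only [hbt, if_true, hΦ]
      by_cases hge : q ≤ H t
      · have h1 : (H (t+1) : ℝ) = (H t : ℝ) - q := by
          rw [hstep, hbt, if_pos rfl]
          exact Nat.cast_sub hge
        rw [h1]
        nlinarith [hnn, hqR, hpR]
      · have h1 : H (t+1) = 0 := by
          rw [hstep, hbt, if_pos rfl]; omega
        rw [h1]
        push_cast
        nlinarith [hnn, hqR, hpR]
  have tele : ∑ t ∈ Finset.range K, (Φ t - Φ (t+1)) = Φ 0 - Φ K :=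
    Finset.sum_range_sub' Φ K
  have hΦ0 : Φ 0 = 0 := by simp [hΦ, hHdef, stackH]
  have hΦK : 0 ≤ Φ K := by positivity
  have sum_key : ∑ t ∈ Finset.range K, 2*(q:ℝ)*((if b t then (H t : ℝ) else 0)
        - (p:ℝ)/(q:ℝ) * (if b t then 0 else (H t : ℝ)))
      ≤ (K:ℝ) * (2*((p:ℝ) + 2*(q:ℝ))*(p:ℝ)) := by
    calc ∑ t ∈ Finset.range K, 2*(q:ℝ)*((if b t then (H t : ℝ) else 0)
          - (p:ℝ)/(q:ℝ) * (if b t then 0 else (H t : ℝ)))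
        ≤ ∑ t ∈ Finset.range K, ((Φ t - Φ (t+1)) + 2*((p:ℝ) + 2*(q:ℝ))*(p:ℝ)) :=
          Finset.sum_le_sum (fun t _ => key t)
      _ = (Φ 0 - Φ K) + (K:ℝ) * (2*((p:ℝ) + 2*(q:ℝ))*(p:ℝ)) := by
          rw [Finset.sum_add_distrib, tele, Finset.sum_const, Finset.card_range,
            nsmul_eq_mul]
      _ ≤ (K:ℝ) * (2*((p:ℝ) + 2*(q:ℝ))*(p:ℝ)) := by
          rw [hΦ0]; linarith
  set A : ℝ := (∑ t ∈ Finset.range K, if b t then (H t : ℝ) else 0)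
      - (p:ℝ)/(q:ℝ) * ∑ t ∈ Finset.range K, (if b t then 0 else (H t : ℝ)) with hA
  have hsumA : ∑ t ∈ Finset.range K, 2*(q:ℝ)*((if b t then (H t : ℝ) else 0)
        - (p:ℝ)/(q:ℝ) * (if b t then 0 else (H t : ℝ))) = 2*(q:ℝ)*A := by
    rw [hA, ← Finset.mul_sum, Finset.sum_sub_distrib, ← Finset.mul_sum]
  rw [hsumA] at sum_key
  have : A ≤ ((p:ℝ) + 2*(q:ℝ))*(p:ℝ)*(K:ℝ)/(q:ℝ) := by
    rw [le_div_iff₀ hqR]; nlinarith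
  calc A ≤ ((p:ℝ) + 2*(q:ℝ))*(p:ℝ)*(K:ℝ)/(q:ℝ) := this
    _ = ((p:ℝ)/(q:ℝ) + 2) * (p:ℝ) * (K:ℝ) := by
        field_simp
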